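/- arXiv:1807.02185 — 9 statements merged into one kernel-verified Lean document; each statement's English description precedes it below -/
import Mathlib

section
/- Let σ ∈ {1,−1} and let u : ℝ × ℝ → ℂ be twice continuously differentiable, and define v : ℝ × ℝ → ℂ by v(x,t) = u(−x,t). Then u satisfies the reverse-space nonlocal NLS equation i·uₜ(x,t) + uₓₓ(x,t) + 2σ[|u(x,t)|² + |u(−x,t)|²]u(x,t) = 0 for all (x,t) ∈ ℝ² if and only if the pair (u,v) satisfies the Manakov system for all (x,t) ∈ ℝ². -/
open Complex

/-- Partial derivative in the second (time) variable. -/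
noncomputable def dt (f : ℝ × ℝ → ℂ) (x t : ℝ) : ℂ :=
  deriv (fun τ : ℝ => f (x, τ)) t

/-- Second partial derivative in the first (space) variable. -/
noncomputable def dxx (f : ℝ × ℝ → ℂ) (x t : ℝ) : ℂ :=
  deriv (deriv (fun y : ℝ => f (y, t))) x

theorem deriv_deriv_comp_neg {𝕜 F : Type*} [NontriviallyNormedField 𝕜] [NormedAddCommGroup F]
    [NormedSpace 𝕜 F] (f : 𝕜 → F) (x : 𝕜) :
    deriv (deriv fun y => f (-y)) x = deriv (deriv f) (-x) := by
  simpa [iteratedDeriv_succ] using iteratedDeriv_comp_neg 2 f x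

theorem dt_comp_neg_space (u : ℝ × ℝ → ℂ) (x t : ℝ) :
    dt (fun p => u (-p.1, p.2)) x t = dt u (-x) t :=
  rfl

theorem dxx_comp_neg_space (u : ℝ × ℝ → ℂ) (x t : ℝ) :
    dxx (fun p => u (-p.1, p.2)) x t = dxx u (-x) t :=
  deriv_deriv_comp_neg (fun y => u (y, t)) x

theorem reverse_space_nonlocal_NLS_iff_Manakov_general
    (σ : ℝ)
    (u : ℝ × ℝ → ℂ)
    (v : ℝ × ℝ → ℂ) (hv : ∀ x t : ℝ, v (x, t) = u (-x, t)) :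
    (∀ x t : ℝ,
      I * dt u x t + dxx u x t +
        2 * (σ : ℂ) * ((‖u (x, t)‖ ^ 2 + ‖u (-x, t)‖ ^ 2 : ℝ) : ℂ)
          * u (x, t) = 0)
    ↔
    (∀ x t : ℝ,
      I * dt u x t + dxx u x t +
        2 * (σ : ℂ) * ((‖u (x, t)‖ ^ 2 + ‖v (x, t)‖ ^ 2 : ℝ) : ℂ)
          * u (x, t) = 0
      ∧
      I * dt v x t + dxx v x t +
        2 * (σ : ℂ) * ((‖u (x, t)‖ ^ 2 + ‖v (x, t)‖ ^ 2 : ℝ) : ℂ)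
          * v (x, t) = 0) := by
  obtain rfl : v = fun p => u (-p.1, p.2) := funext fun p => hv p.1 p.2
  refine ⟨fun h x t => ⟨h x t, ?_⟩, fun h x t => (h x t).1⟩
  rw [dt_comp_neg_space, dxx_comp_neg_space, add_comm (‖u (x, t)‖ ^ 2)]
  simpa only [neg_neg] using h (-x) t

theorem reverse_space_nonlocal_NLS_iff_Manakov
    (σ : ℝ) (hσ : σ = 1 ∨ σ = -1)
    (u : ℝ × ℝ → ℂ) (hu : ContDiff ℝ 2 u)
    (v : ℝ × ℝ → ℂ) (hv : ∀ x t : ℝ, v (x, t) = u (-x, t)) :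
    (∀ x t : ℝ,
      I * dt u x t + dxx u x t +
        2 * (σ : ℂ) * ((‖u (x, t)‖ ^ 2 + ‖u (-x, t)‖ ^ 2 : ℝ) : ℂ)
          * u (x, t) = 0)
    ↔
    (∀ x t : ℝ,
      I * dt u x t + dxx u x t +
        2 * (σ : ℂ) * ((‖u (x, t)‖ ^ 2 + ‖v (x, t)‖ ^ 2 : ℝ) : ℂ)
          * u (x, t) = 0
      ∧
      I * dt v x t + dxx v x t +
        2 * (σ : ℂ) * ((‖u (x, t)‖ ^ 2 + ‖v (x, t)‖ ^ 2 : ℝ) : ℂ)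
          * v (x, t) = 0) :=
  reverse_space_nonlocal_NLS_iff_Manakov_general σ u v hv
end

section
/- Let σ ∈ {1,−1} and let u : ℝ × ℝ → ℂ be twice continuously differentiable, and define v : ℝ × ℝ → ℂ by v(x,t) = conj(u(x,−t)). Then u satisfies the reverse-time nonlocal NLS equation i·uₜ(x,t) + uₓₓ(x,t) + 2σ[|u(x,t)|² + |u(x,−t)|²]u(x,t) = 0 for all (x,t) ∈ ℝ² if and only if the pair (u,v) satisfies the Manakov system for all (x,t) ∈ ℝ². -/
open Complex

open scoped ComplexConjugate

/-! Conjugation commutes with one-variable derivatives and the reflection `t ↦ -t` flips their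
sign, at every point, differentiable or not (`deriv` is `0` on both sides otherwise). Hence the
`v`-equation of the Manakov system at `(x, t)` is the conjugate of the nonlocal equation at
`(x, -t)`, the nonlinearity `‖u‖² + ‖v‖²` being symmetric under this substitution. -/

def timeReverseConj (u : ℝ × ℝ → ℂ) : ℝ × ℝ → ℂ := fun p => conj (u (p.1, -p.2))

section

variable (u : ℝ × ℝ → ℂ) (x t : ℝ)

@[simp]
lemma timeReverseConj_apply : timeReverseConj u (x, t) = conj (u (x, -t)) := rfl

lemma norm_timeReverseConj : ‖timeReverseConj u (x, t)‖ = ‖u (x, -t)‖ := by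
  simp

lemma dt_timeReverseConj : dt (timeReverseConj u) x t = -conj (dt u x (-t)) := by
  simp only [dt, timeReverseConj_apply, ← Complex.star_def, deriv.star,
    deriv_comp_neg (fun τ => u (x, τ)), star_neg]

lemma dxx_timeReverseConj : dxx (timeReverseConj u) x t = conj (dxx u x (-t)) := by
  simp only [dxx, timeReverseConj_apply, ← Complex.star_def, deriv.star']

lemma manakov_timeReverseConj_eq_conj (σ : ℝ) :
    I * dt (timeReverseConj u) x t + dxx (timeReverseConj u) x t +
        2 * (σ : ℂ) * ((‖u (x, t)‖ ^ 2 + ‖timeReverseConj u (x, t)‖ ^ 2 : ℝ) : ℂ)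
          * timeReverseConj u (x, t) =
      conj (I * dt u x (-t) + dxx u x (-t) +
        2 * (σ : ℂ) * ((‖u (x, -t)‖ ^ 2 + ‖u (x, - -t)‖ ^ 2 : ℝ) : ℂ) * u (x, -t)) := by
  rw [dt_timeReverseConj, dxx_timeReverseConj, norm_timeReverseConj, neg_neg,
    add_comm (‖u (x, t)‖ ^ 2)]
  simp only [map_add, map_mul, conj_I, conj_ofReal, map_ofNat, timeReverseConj_apply]
  ring

end

theorem reverse_time_nonlocal_NLS_iff_Manakov_general
    (σ : ℝ)
    (u : ℝ × ℝ → ℂ)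
    (v : ℝ × ℝ → ℂ) (hv : ∀ x t : ℝ, v (x, t) = (starRingEnd ℂ) (u (x, -t))) :
    (∀ x t : ℝ,
      I * dt u x t + dxx u x t +
        2 * (σ : ℂ) * ((‖u (x, t)‖ ^ 2 + ‖u (x, -t)‖ ^ 2 : ℝ) : ℂ)
          * u (x, t) = 0)
    ↔
    (∀ x t : ℝ,
      I * dt u x t + dxx u x t +
        2 * (σ : ℂ) * ((‖u (x, t)‖ ^ 2 + ‖v (x, t)‖ ^ 2 : ℝ) : ℂ)
          * u (x, t) = 0
      ∧
      I * dt v x t + dxx v x t +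
        2 * (σ : ℂ) * ((‖u (x, t)‖ ^ 2 + ‖v (x, t)‖ ^ 2 : ℝ) : ℂ)
          * v (x, t) = 0) := by
  obtain rfl : v = timeReverseConj u := funext fun ⟨x, t⟩ => hv x t
  refine ⟨fun h x t => ⟨?_, ?_⟩, fun h x t => ?_⟩
  · rw [norm_timeReverseConj]
    exact h x t
  · rw [manakov_timeReverseConj_eq_conj, h x (-t), map_zero]
  · simpa only [norm_timeReverseConj] using (h x t).1

theorem reverse_time_nonlocal_NLS_iff_Manakov
    (σ : ℝ) (hσ : σ = 1 ∨ σ = -1)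
    (u : ℝ × ℝ → ℂ) (hu : ContDiff ℝ 2 u)
    (v : ℝ × ℝ → ℂ) (hv : ∀ x t : ℝ, v (x, t) = (starRingEnd ℂ) (u (x, -t))) :
    (∀ x t : ℝ,
      I * dt u x t + dxx u x t +
        2 * (σ : ℂ) * ((‖u (x, t)‖ ^ 2 + ‖u (x, -t)‖ ^ 2 : ℝ) : ℂ)
          * u (x, t) = 0)
    ↔
    (∀ x t : ℝ,
      I * dt u x t + dxx u x t +
        2 * (σ : ℂ) * ((‖u (x, t)‖ ^ 2 + ‖v (x, t)‖ ^ 2 : ℝ) : ℂ)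
          * u (x, t) = 0
      ∧
      I * dt v x t + dxx v x t +
        2 * (σ : ℂ) * ((‖u (x, t)‖ ^ 2 + ‖v (x, t)‖ ^ 2 : ℝ) : ℂ)
          * v (x, t) = 0) :=
  reverse_time_nonlocal_NLS_iff_Manakov_general σ u v hv
end

section
/- Let σ ∈ {1,−1} and let u : ℝ × ℝ → ℂ be twice continuously differentiable, and define v : ℝ × ℝ → ℂ by v(x,t) = conj(u(−x,−t)). Then u satisfies the reverse-space-time nonlocal NLS equation i·uₜ(x,t) + uₓₓ(x,t) + 2σ[|u(x,t)|² + |u(−x,−t)|²]u(x,t) = 0 for all (x,t) ∈ ℝ² if and only if the pair (u,v) satisfies the Manakov system for all (x,t) ∈ ℝ². -/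
open Complex

open scoped ComplexConjugate

/-!
Since `|v(x,t)| = |u(-x,-t)|`, the first Manakov equation is the nonlocal equation itself. The
map `u ↦ v` flips the sign of `∂ₜ` and keeps `∂ₓₓ`, and `conj I = -I`; hence the second Manakov
equation at `(x, t)` is the complex conjugate of the nonlocal equation at `(-x, -t)`.
-/

section Reflection

variable {F : Type*} [NormedAddCommGroup F] [NormedSpace ℝ F] [StarAddMonoid F]
  [StarModule ℝ F] [ContinuousStar F]

theorem deriv_star_comp_neg (f : ℝ → F) (x : ℝ) :
    deriv (fun y => star (f (-y))) x = -star (deriv f (-x)) := by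
  rw [deriv.star, deriv_comp_neg, star_neg]

theorem deriv_deriv_star_comp_neg (f : ℝ → F) (x : ℝ) :
    deriv (deriv fun y => star (f (-y))) x = star (deriv (deriv f) (-x)) := by
  rw [funext (deriv_star_comp_neg f), deriv.fun_neg, deriv_star_comp_neg, neg_neg]

end Reflection

section ConjReflection

variable {u v : ℝ × ℝ → ℂ}

theorem dt_eq_neg_conj_dt_neg (hv : ∀ x t : ℝ, v (x, t) = conj (u (-x, -t))) (x t : ℝ) :
    dt v x t = -conj (dt u (-x) (-t)) := by
  simp only [dt, hv]
  exact deriv_star_comp_neg (fun τ => u (-x, τ)) t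

theorem dxx_eq_conj_dxx_neg (hv : ∀ x t : ℝ, v (x, t) = conj (u (-x, -t))) (x t : ℝ) :
    dxx v x t = conj (dxx u (-x) (-t)) := by
  simp only [dxx, hv]
  exact deriv_deriv_star_comp_neg (fun y => u (y, -t)) x

theorem manakov_snd_eq_conj_nonlocal (hv : ∀ x t : ℝ, v (x, t) = conj (u (-x, -t)))
    (σ x t : ℝ) :
    I * dt v x t + dxx v x t +
        2 * (σ : ℂ) * ((‖u (x, t)‖ ^ 2 + ‖v (x, t)‖ ^ 2 : ℝ) : ℂ) * v (x, t) =
      conj (I * dt u (-x) (-t) + dxx u (-x) (-t) +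
        2 * (σ : ℂ) * ((‖u (-x, -t)‖ ^ 2 + ‖u (x, t)‖ ^ 2 : ℝ) : ℂ) * u (-x, -t)) := by
  simp only [dt_eq_neg_conj_dt_neg hv, dxx_eq_conj_dxx_neg hv, hv, norm_conj,
    map_add, map_mul, conj_I, conj_ofReal, map_ofNat]
  push_cast
  ring

end ConjReflection

theorem reverse_space_time_nonlocal_NLS_iff_Manakov_general
    (σ : ℝ)
    (u : ℝ × ℝ → ℂ)
    (v : ℝ × ℝ → ℂ) (hv : ∀ x t : ℝ, v (x, t) = (starRingEnd ℂ) (u (-x, -t))) :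
    (∀ x t : ℝ,
      I * dt u x t + dxx u x t +
        2 * (σ : ℂ) * ((‖u (x, t)‖ ^ 2 + ‖u (-x, -t)‖ ^ 2 : ℝ) : ℂ)
          * u (x, t) = 0)
    ↔
    (∀ x t : ℝ,
      I * dt u x t + dxx u x t +
        2 * (σ : ℂ) * ((‖u (x, t)‖ ^ 2 + ‖v (x, t)‖ ^ 2 : ℝ) : ℂ)
          * u (x, t) = 0
      ∧
      I * dt v x t + dxx v x t +
        2 * (σ : ℂ) * ((‖u (x, t)‖ ^ 2 + ‖v (x, t)‖ ^ 2 : ℝ) : ℂ)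
          * v (x, t) = 0) := by
  have hnorm : ∀ x t : ℝ, ‖v (x, t)‖ = ‖u (-x, -t)‖ := fun x t => by rw [hv, norm_conj]
  simp_rw [manakov_snd_eq_conj_nonlocal hv, map_eq_zero, hnorm]
  exact ⟨fun h x t => ⟨h x t, by simpa only [neg_neg] using h (-x) (-t)⟩, fun h x t => (h x t).1⟩

theorem reverse_space_time_nonlocal_NLS_iff_Manakov
    (σ : ℝ) (hσ : σ = 1 ∨ σ = -1)
    (u : ℝ × ℝ → ℂ) (hu : ContDiff ℝ 2 u)
    (v : ℝ × ℝ → ℂ) (hv : ∀ x t : ℝ, v (x, t) = (starRingEnd ℂ) (u (-x, -t))) :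
    (∀ x t : ℝ,
      I * dt u x t + dxx u x t +
        2 * (σ : ℂ) * ((‖u (x, t)‖ ^ 2 + ‖u (-x, -t)‖ ^ 2 : ℝ) : ℂ)
          * u (x, t) = 0)
    ↔
    (∀ x t : ℝ,
      I * dt u x t + dxx u x t +
        2 * (σ : ℂ) * ((‖u (x, t)‖ ^ 2 + ‖v (x, t)‖ ^ 2 : ℝ) : ℂ)
          * u (x, t) = 0
      ∧
      I * dt v x t + dxx v x t +
        2 * (σ : ℂ) * ((‖u (x, t)‖ ^ 2 + ‖v (x, t)‖ ^ 2 : ℝ) : ℂ)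
          * v (x, t) = 0) :=
  reverse_space_time_nonlocal_NLS_iff_Manakov_general σ u v hv
end

section
/- Let σ ∈ {1,−1} and let u, v : ℝ × ℝ → ℂ be twice continuously differentiable, and define w(x,t) = conj(u(x,−t)) and s(x,t) = conj(v(x,−t)). Then (u,v,w,s) satisfies the four-component coupled NLS system for all (x,t) ∈ ℝ² if and only if (u,v) satisfies the reverse-time nonlocal Manakov system: i·uₜ(x,t) + uₓₓ(x,t) + 2σ[|u(x,t)|²+|u(x,−t)|²+|v(x,t)|²+|v(x,−t)|²]u(x,t) = 0 and i·vₜ(x,t) + vₓₓ(x,t) + 2σ[|u(x,t)|²+|u(x,−t)|²+|v(x,t)|²+|v(x,−t)|²]v(x,t) = 0 for all (x,t) ∈ ℝ². -/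
open Complex

/-! The reflection `q ↦ conj (q (x, -t))` maps solutions of the NLS equation with a real
potential `P` to solutions with the reflected potential: the time reversal flips the sign
of `qₜ`, and conjugation flips it back through `conj I = -I`. For the four-component system
the potential `|u|² + |v|² + |w|² + |s|²` is invariant under `t ↦ -t`, so the equations for
`w` and `s` are those for `u` and `v` at `-t`. -/

section ConjReverse

variable {q w : ℝ × ℝ → ℂ}

lemma dt_of_conj_reverse (hw : ∀ x t : ℝ, w (x, t) = starRingEnd ℂ (q (x, -t)))
    (x t : ℝ) : dt w x t = -starRingEnd ℂ (dt q x (-t)) := by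
  have hfun : (fun τ : ℝ => w (x, τ)) = fun τ => star (q (x, -τ)) := funext fun τ => hw x τ
  rw [dt, hfun, deriv.star, deriv_comp_neg (f := fun τ : ℝ => q (x, τ)), star_neg]
  rfl

lemma dxx_of_conj_reverse (hw : ∀ x t : ℝ, w (x, t) = starRingEnd ℂ (q (x, -t)))
    (x t : ℝ) : dxx w x t = starRingEnd ℂ (dxx q x (-t)) := by
  have hfun : (fun y : ℝ => w (y, t)) = fun y => star (q (y, -t)) := funext fun y => hw y t
  rw [dxx, hfun, deriv.star', deriv.star]
  rfl

lemma nls_of_conj_reverse_eq_zero_iff (hw : ∀ x t : ℝ, w (x, t) = starRingEnd ℂ (q (x, -t)))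
    (σ P : ℝ) (x t : ℝ) :
    I * dt w x t + dxx w x t + 2 * (σ : ℂ) * (P : ℂ) * w (x, t) = 0 ↔
      I * dt q x (-t) + dxx q x (-t) + 2 * (σ : ℂ) * (P : ℂ) * q (x, -t) = 0 := by
  have hconj : I * dt w x t + dxx w x t + 2 * (σ : ℂ) * (P : ℂ) * w (x, t) =
      starRingEnd ℂ (I * dt q x (-t) + dxx q x (-t) + 2 * (σ : ℂ) * (P : ℂ) * q (x, -t)) := by
    simp only [dt_of_conj_reverse hw, dxx_of_conj_reverse hw, hw, map_add, map_mul, conj_I,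
      conj_ofReal, map_ofNat]
    ring
  rw [hconj, map_eq_zero]

end ConjReverse

theorem four_component_iff_reverse_time_nonlocal_Manakov_general
    (σ : ℝ)
    (u v : ℝ × ℝ → ℂ)
    (w s : ℝ × ℝ → ℂ)
    (hw : ∀ x t : ℝ, w (x, t) = (starRingEnd ℂ) (u (x, -t)))
    (hs : ∀ x t : ℝ, s (x, t) = (starRingEnd ℂ) (v (x, -t))) :
    (∀ x t : ℝ,
      (I * dt u x t + dxx u x t +
        2 * (σ : ℂ) * ((‖u (x, t)‖ ^ 2 + ‖v (x, t)‖ ^ 2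
          + ‖w (x, t)‖ ^ 2 + ‖s (x, t)‖ ^ 2 : ℝ) : ℂ) * u (x, t) = 0)
      ∧
      (I * dt v x t + dxx v x t +
        2 * (σ : ℂ) * ((‖u (x, t)‖ ^ 2 + ‖v (x, t)‖ ^ 2
          + ‖w (x, t)‖ ^ 2 + ‖s (x, t)‖ ^ 2 : ℝ) : ℂ) * v (x, t) = 0)
      ∧
      (I * dt w x t + dxx w x t +
        2 * (σ : ℂ) * ((‖u (x, t)‖ ^ 2 + ‖v (x, t)‖ ^ 2
          + ‖w (x, t)‖ ^ 2 + ‖s (x, t)‖ ^ 2 : ℝ) : ℂ) * w (x, t) = 0)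
      ∧
      (I * dt s x t + dxx s x t +
        2 * (σ : ℂ) * ((‖u (x, t)‖ ^ 2 + ‖v (x, t)‖ ^ 2
          + ‖w (x, t)‖ ^ 2 + ‖s (x, t)‖ ^ 2 : ℝ) : ℂ) * s (x, t) = 0))
    ↔
    (∀ x t : ℝ,
      (I * dt u x t + dxx u x t +
        2 * (σ : ℂ) * ((‖u (x, t)‖ ^ 2 + ‖u (x, -t)‖ ^ 2
          + ‖v (x, t)‖ ^ 2 + ‖v (x, -t)‖ ^ 2 : ℝ) : ℂ) * u (x, t) = 0)
      ∧
      (I * dt v x t + dxx v x t +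
        2 * (σ : ℂ) * ((‖u (x, t)‖ ^ 2 + ‖u (x, -t)‖ ^ 2
          + ‖v (x, t)‖ ^ 2 + ‖v (x, -t)‖ ^ 2 : ℝ) : ℂ) * v (x, t) = 0)) := by
  have hP : ∀ x t : ℝ, ‖u (x, t)‖ ^ 2 + ‖v (x, t)‖ ^ 2 + ‖w (x, t)‖ ^ 2 + ‖s (x, t)‖ ^ 2 =
      ‖u (x, t)‖ ^ 2 + ‖u (x, -t)‖ ^ 2 + ‖v (x, t)‖ ^ 2 + ‖v (x, -t)‖ ^ 2 := by
    intro x t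
    rw [hw, hs, Complex.norm_conj, Complex.norm_conj]
    ring
  have hP_neg : ∀ x t : ℝ,
      ‖u (x, -t)‖ ^ 2 + ‖u (x, - -t)‖ ^ 2 + ‖v (x, -t)‖ ^ 2 + ‖v (x, - -t)‖ ^ 2 =
        ‖u (x, t)‖ ^ 2 + ‖u (x, -t)‖ ^ 2 + ‖v (x, t)‖ ^ 2 + ‖v (x, -t)‖ ^ 2 := by
    intro x t
    rw [neg_neg]
    ring
  simp only [hP]
  refine ⟨fun H x t => ⟨(H x t).1, (H x t).2.1⟩, fun H x t => ⟨(H x t).1, (H x t).2, ?_, ?_⟩⟩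
  · rw [nls_of_conj_reverse_eq_zero_iff hw, ← hP_neg]
    exact (H x (-t)).1
  · rw [nls_of_conj_reverse_eq_zero_iff hs, ← hP_neg]
    exact (H x (-t)).2

theorem four_component_iff_reverse_time_nonlocal_Manakov
    (σ : ℝ) (hσ : σ = 1 ∨ σ = -1)
    (u v : ℝ × ℝ → ℂ) (hu : ContDiff ℝ 2 u) (hvC : ContDiff ℝ 2 v)
    (w s : ℝ × ℝ → ℂ)
    (hw : ∀ x t : ℝ, w (x, t) = (starRingEnd ℂ) (u (x, -t)))
    (hs : ∀ x t : ℝ, s (x, t) = (starRingEnd ℂ) (v (x, -t))) :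
    (∀ x t : ℝ,
      (I * dt u x t + dxx u x t +
        2 * (σ : ℂ) * ((‖u (x, t)‖ ^ 2 + ‖v (x, t)‖ ^ 2
          + ‖w (x, t)‖ ^ 2 + ‖s (x, t)‖ ^ 2 : ℝ) : ℂ) * u (x, t) = 0)
      ∧
      (I * dt v x t + dxx v x t +
        2 * (σ : ℂ) * ((‖u (x, t)‖ ^ 2 + ‖v (x, t)‖ ^ 2
          + ‖w (x, t)‖ ^ 2 + ‖s (x, t)‖ ^ 2 : ℝ) : ℂ) * v (x, t) = 0)
      ∧
      (I * dt w x t + dxx w x t +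
        2 * (σ : ℂ) * ((‖u (x, t)‖ ^ 2 + ‖v (x, t)‖ ^ 2
          + ‖w (x, t)‖ ^ 2 + ‖s (x, t)‖ ^ 2 : ℝ) : ℂ) * w (x, t) = 0)
      ∧
      (I * dt s x t + dxx s x t +
        2 * (σ : ℂ) * ((‖u (x, t)‖ ^ 2 + ‖v (x, t)‖ ^ 2
          + ‖w (x, t)‖ ^ 2 + ‖s (x, t)‖ ^ 2 : ℝ) : ℂ) * s (x, t) = 0))
    ↔
    (∀ x t : ℝ,
      (I * dt u x t + dxx u x t +
        2 * (σ : ℂ) * ((‖u (x, t)‖ ^ 2 + ‖u (x, -t)‖ ^ 2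
          + ‖v (x, t)‖ ^ 2 + ‖v (x, -t)‖ ^ 2 : ℝ) : ℂ) * u (x, t) = 0)
      ∧
      (I * dt v x t + dxx v x t +
        2 * (σ : ℂ) * ((‖u (x, t)‖ ^ 2 + ‖u (x, -t)‖ ^ 2
          + ‖v (x, t)‖ ^ 2 + ‖v (x, -t)‖ ^ 2 : ℝ) : ℂ) * v (x, t) = 0)) :=
  four_component_iff_reverse_time_nonlocal_Manakov_general σ u v w s hw hs
end

section
/- Let η > 0 and α₁, β₁ ∈ ℂ with (α₁, β₁) ≠ (0,0). Define u(x,t) = 4η·α₁·e^{4iη²t}/(e^{−2ηx} + (|α₁|²+|β₁|²)e^{2ηx}) and v(x,t) = 4η·β₁·e^{4iη²t}/(e^{−2ηx} + (|α₁|²+|β₁|²)e^{2ηx}). Then v(x,t) = u(−x,t) for all (x,t) ∈ ℝ² if and only if α₁ = β₁ and |α₁|² = 1/2 (equivalently, α₁ = β₁ = 2^{−1/2}e^{iγ} for some real γ). -/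
open Complex

/-!
Both components share the factor `4η e^{4iη²t} / D(x)` with
`D(x) = e^{-2ηx} + s e^{2ηx}`, `s = |α₁|² + |β₁|²`, so the parity condition amounts to
`β₁ D(-x) = α₁ D(x)` for all `x`. At `x = 0` this forces `α₁ = β₁ ≠ 0`, after which `D` must be
even; since `D(-x) - D(x) = (1 - s)(e^{2ηx} - e^{-2ηx})`, that happens exactly when `s = 1`,
i.e. `2|α₁|² = 1`.
-/

noncomputable def solitonDenom (η s x : ℝ) : ℝ :=
  Real.exp (-(2 * η * x)) + s * Real.exp (2 * η * x)

lemma solitonDenom_pos (η x : ℝ) {s : ℝ} (hs : 0 ≤ s) : 0 < solitonDenom η s x := by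
  unfold solitonDenom
  positivity

lemma solitonDenom_neg_sub (η s x : ℝ) :
    solitonDenom η s (-x) - solitonDenom η s x =
      (1 - s) * (Real.exp (2 * η * x) - Real.exp (-(2 * η * x))) := by
  unfold solitonDenom
  ring_nf

lemma solitonDenom_even_iff {η : ℝ} (hη : η ≠ 0) (s : ℝ) :
    (∀ x, solitonDenom η s (-x) = solitonDenom η s x) ↔ s = 1 := by
  refine ⟨fun h => ?_, fun hs x => ?_⟩
  · have hexp : Real.exp (2 * η * 1) - Real.exp (-(2 * η * 1)) ≠ 0 := by
      rw [sub_ne_zero, Ne, Real.exp_eq_exp]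
      intro h'
      exact hη (by linarith)
    have h1 := solitonDenom_neg_sub η s 1
    rw [h 1, sub_self, eq_comm, mul_eq_zero] at h1
    rcases h1 with h1 | h1
    · linarith
    · exact absurd h1 hexp
  · subst hs
    have h1 := solitonDenom_neg_sub η 1 x
    rwa [sub_self, zero_mul, sub_eq_zero] at h1

lemma forall_mul_comp_neg_eq_mul_iff {K G : Type*} [Field K] [NegZeroClass G]
    {α β : K} (hαβ : ¬(α = 0 ∧ β = 0)) {D : G → K} (hD0 : D 0 ≠ 0) :
    (∀ x, β * D (-x) = α * D x) ↔ α = β ∧ ∀ x, D (-x) = D x := by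
  refine ⟨fun h => ?_, fun ⟨hab, hD⟩ x => by rw [hab, hD]⟩
  have hab : α = β := by
    have h0 := h 0
    rw [neg_zero] at h0
    exact (mul_right_cancel₀ hD0 h0).symm
  have hα : α ≠ 0 := fun hα => hαβ ⟨hα, hab ▸ hα⟩
  refine ⟨hab, fun x => mul_left_cancel₀ hα ?_⟩
  rw [← h x, hab]

lemma forall_mul_div_eq_mul_div_comp_neg_iff {K G ι : Type*} [Field K] [Neg G]
    {k α β : K} (hk : k ≠ 0) {e : ι → K} (he : ∃ t, e t ≠ 0) {D : G → K}
    (hD : ∀ x, D x ≠ 0) :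
    (∀ x t, k * β * e t / D x = k * α * e t / D (-x)) ↔ ∀ x, β * D (-x) = α * D x := by
  simp only [div_eq_div_iff (hD _) (hD _)]
  refine ⟨fun h x => ?_, fun h x t => by linear_combination k * e t * h x⟩
  obtain ⟨t, ht⟩ := he
  apply mul_left_cancel₀ (mul_ne_zero hk ht)
  linear_combination h x t

theorem one_soliton_parity_reduction
    (η : ℝ) (hη : 0 < η) (α₁ β₁ : ℂ) (hαβ : ¬(α₁ = 0 ∧ β₁ = 0))
    (u v : ℝ × ℝ → ℂ)
    (hu : ∀ x t : ℝ, u (x, t) =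
      4 * (η : ℂ) * α₁ * Complex.exp (4 * I * (η : ℂ) ^ 2 * (t : ℂ)) /
        ((Real.exp (-(2 * η * x)) +
          (‖α₁‖ ^ 2 + ‖β₁‖ ^ 2) * Real.exp (2 * η * x) : ℝ) : ℂ))
    (hv : ∀ x t : ℝ, v (x, t) =
      4 * (η : ℂ) * β₁ * Complex.exp (4 * I * (η : ℂ) ^ 2 * (t : ℂ)) /
        ((Real.exp (-(2 * η * x)) +
          (‖α₁‖ ^ 2 + ‖β₁‖ ^ 2) * Real.exp (2 * η * x) : ℝ) : ℂ)) :
    (∀ x t : ℝ, v (x, t) = u (-x, t)) ↔ (α₁ = β₁ ∧ ‖α₁‖ ^ 2 = 1 / 2) := by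
  set s : ℝ := ‖α₁‖ ^ 2 + ‖β₁‖ ^ 2 with hs
  have hs0 : 0 ≤ s := by positivity
  have hD : ∀ x, ((solitonDenom η s x : ℝ) : ℂ) ≠ 0 := fun x =>
    ofReal_ne_zero.mpr (solitonDenom_pos η x hs0).ne'
  simp only [hu, hv]
  calc (∀ x t : ℝ, _) ↔ ∀ x : ℝ, β₁ * (solitonDenom η s (-x) : ℂ) = α₁ * solitonDenom η s x :=
        forall_mul_div_eq_mul_div_comp_neg_iff (by exact_mod_cast (by positivity : 4 * η ≠ 0))
          (e := fun t : ℝ => Complex.exp (4 * I * (η : ℂ) ^ 2 * (t : ℂ))) ⟨0, Complex.exp_ne_zero _⟩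
          (D := fun x => (solitonDenom η s x : ℂ)) hD
    _ ↔ α₁ = β₁ ∧ ∀ x : ℝ, (solitonDenom η s (-x) : ℂ) = solitonDenom η s x :=
        forall_mul_comp_neg_eq_mul_iff hαβ (D := fun x => (solitonDenom η s x : ℂ)) (hD 0)
    _ ↔ α₁ = β₁ ∧ s = 1 := by
        simp only [ofReal_inj, solitonDenom_even_iff hη.ne']
    _ ↔ α₁ = β₁ ∧ ‖α₁‖ ^ 2 = 1 / 2 := and_congr_right fun hab => by
        rw [hs, hab]
        constructor <;> intro h <;> linarith
end

section
/- Let η > 0 and define u : ℝ × ℝ → ℂ by u(x,t) = √2·η·e^{4iη²t}/cosh(2ηx). Then u satisfies the focusing reverse-space nonlocal NLS equation: i·uₜ(x,t) + uₓₓ(x,t) + 2[|u(x,t)|² + |u(−x,t)|²]u(x,t) = 0 for all (x,t) ∈ ℝ². -/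
open Complex

/-! For the standing wave `u = A e^{iωt} sech (k x)` one has `i u_t = -ω u` and
`u_xx = k² (1 - 2 sech² (k x)) u`, while `|u|` is even in `x`, so the nonlocal term is
`4 A² sech² (k x) u`. The equation therefore reduces to `ω = k²` and `2 A² = k²`, which hold for
`A = √2 η`, `k = 2 η`, `ω = 4 η²`. -/

theorem deriv_ofReal_comp_mul_const {f : ℝ → ℝ} (hf : Differentiable ℝ f) (c : ℂ) :
    deriv (fun y : ℝ => (f y : ℂ) * c) = fun y => ((deriv f y : ℝ) : ℂ) * c :=
  funext fun y => ((hf y).hasDerivAt.ofReal_comp.mul_const c).deriv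

section Sech

variable (k : ℝ)

theorem hasDerivAt_inv_cosh_mul (x : ℝ) :
    HasDerivAt (fun y => (Real.cosh (k * y))⁻¹)
      (-k * Real.sinh (k * x) * (Real.cosh (k * x))⁻¹ ^ 2) x := by
  refine (((hasDerivAt_id' x).const_mul k).cosh.inv (Real.cosh_pos (k * x)).ne').congr_deriv ?_
  ring

theorem deriv_inv_cosh_mul :
    deriv (fun y => (Real.cosh (k * y))⁻¹) =
      fun y => -k * Real.sinh (k * y) * (Real.cosh (k * y))⁻¹ ^ 2 :=
  funext fun x => (hasDerivAt_inv_cosh_mul k x).deriv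

theorem differentiable_inv_cosh_mul : Differentiable ℝ fun y => (Real.cosh (k * y))⁻¹ :=
  fun x => (hasDerivAt_inv_cosh_mul k x).differentiableAt

theorem hasDerivAt_deriv_inv_cosh_mul (x : ℝ) :
    HasDerivAt (deriv fun y => (Real.cosh (k * y))⁻¹)
      (k ^ 2 * ((Real.cosh (k * x))⁻¹ - 2 * (Real.cosh (k * x))⁻¹ ^ 3)) x := by
  have hsinh := ((hasDerivAt_id' x).const_mul k).sinh
  have h := (hsinh.const_mul (-k)).fun_mul ((hasDerivAt_inv_cosh_mul k x).fun_pow 2)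
  rw [deriv_inv_cosh_mul]
  refine h.congr_deriv ?_
  have hcosh := (Real.cosh_pos (k * x)).ne'
  simp only [Nat.cast_ofNat, Nat.add_one_sub_one, pow_one]
  field_simp
  linear_combination (-2 * k ^ 2) * Real.cosh_sq_sub_sinh_sq (k * x)

end Sech

def IsReverseSpaceNonlocalNLSSolution (u : ℝ × ℝ → ℂ) : Prop :=
  ∀ x t : ℝ, I * dt u x t + dxx u x t +
    2 * ((‖u (x, t)‖ ^ 2 + ‖u (-x, t)‖ ^ 2 : ℝ) : ℂ) * u (x, t) = 0

noncomputable def sechStandingWave (A k ω : ℝ) (p : ℝ × ℝ) : ℂ :=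
  ((A * (Real.cosh (k * p.1))⁻¹ : ℝ) : ℂ) * exp (ω * p.2 * I)

section SechStandingWave

variable (A k ω : ℝ)

theorem dt_sechStandingWave (x t : ℝ) :
    dt (sechStandingWave A k ω) x t = ω * I * sechStandingWave A k ω (x, t) := by
  have h := ((((hasDerivAt_id' t).ofReal_comp).const_mul (ω : ℂ)).mul_const I).cexp.const_mul
    ((A * (Real.cosh (k * x))⁻¹ : ℝ) : ℂ)
  simp only [dt, sechStandingWave]
  rw [h.deriv]
  push_cast
  ring

theorem dxx_sechStandingWave (x t : ℝ) :
    dxx (sechStandingWave A k ω) x t =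
      k ^ 2 * (1 - 2 * ((Real.cosh (k * x))⁻¹ ^ 2 : ℝ)) * sechStandingWave A k ω (x, t) := by
  have hprofile : (fun y => sechStandingWave A k ω (y, t)) =
      fun y => ((Real.cosh (k * y))⁻¹ : ℝ) * (A * exp (ω * t * I)) := by
    ext y
    simp only [sechStandingWave]
    push_cast
    ring
  rw [dxx, hprofile, deriv_ofReal_comp_mul_const (differentiable_inv_cosh_mul k),
    deriv_ofReal_comp_mul_const fun y => (hasDerivAt_deriv_inv_cosh_mul k y).differentiableAt]
  dsimp only
  rw [(hasDerivAt_deriv_inv_cosh_mul k x).deriv, sechStandingWave]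
  push_cast
  ring

theorem norm_sechStandingWave_sq (x t : ℝ) :
    ‖sechStandingWave A k ω (x, t)‖ ^ 2 = A ^ 2 * (Real.cosh (k * x))⁻¹ ^ 2 := by
  rw [sechStandingWave, norm_mul, ← ofReal_mul, norm_exp_ofReal_mul_I, norm_real, Real.norm_eq_abs,
    mul_one, sq_abs]
  ring

theorem norm_sechStandingWave_neg (x t : ℝ) :
    ‖sechStandingWave A k ω (-x, t)‖ = ‖sechStandingWave A k ω (x, t)‖ := by
  simp only [sechStandingWave, mul_neg, Real.cosh_neg]

theorem sechStandingWave_isReverseSpaceNonlocalNLSSolution (hω : ω = k ^ 2)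
    (hA : 2 * A ^ 2 = k ^ 2) :
    IsReverseSpaceNonlocalNLSSolution (sechStandingWave A k ω) := by
  intro x t
  rw [dt_sechStandingWave, dxx_sechStandingWave, norm_sechStandingWave_neg,
    norm_sechStandingWave_sq, hω]
  have hA' : 2 * (A : ℂ) ^ 2 = (k : ℂ) ^ 2 := by exact_mod_cast hA
  push_cast
  linear_combination (k ^ 2 * sechStandingWave A k (k ^ 2) (x, t)) * I_sq +
    (2 * (cosh (k * x))⁻¹ ^ 2 * sechStandingWave A k (k ^ 2) (x, t)) * hA'

end SechStandingWave

theorem one_soliton_solves_reverse_space_nonlocal_NLS_general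
    (η : ℝ)
    (u : ℝ × ℝ → ℂ)
    (hu : ∀ x t : ℝ, u (x, t) =
      ((Real.sqrt 2 * η : ℝ) : ℂ) * Complex.exp (4 * I * (η : ℂ) ^ 2 * (t : ℂ)) /
        Complex.cosh (2 * (η : ℂ) * (x : ℂ))) :
    ∀ x t : ℝ,
      I * dt u x t + dxx u x t +
        2 * ((‖u (x, t)‖ ^ 2 + ‖u (-x, t)‖ ^ 2 : ℝ) : ℂ)
          * u (x, t) = 0 := by
  have hu_eq : u = sechStandingWave (Real.sqrt 2 * η) (2 * η) (4 * η ^ 2) := by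
    funext ⟨x, t⟩
    rw [hu, sechStandingWave]
    push_cast
    ring_nf
  subst hu_eq
  refine sechStandingWave_isReverseSpaceNonlocalNLSSolution _ _ _ (by ring) ?_
  rw [mul_pow, Real.sq_sqrt zero_le_two]
  ring

theorem one_soliton_solves_reverse_space_nonlocal_NLS
    (η : ℝ) (hη : 0 < η)
    (u : ℝ × ℝ → ℂ)
    (hu : ∀ x t : ℝ, u (x, t) =
      ((Real.sqrt 2 * η : ℝ) : ℂ) * Complex.exp (4 * I * (η : ℂ) ^ 2 * (t : ℂ)) /
        Complex.cosh (2 * (η : ℂ) * (x : ℂ))) :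
    ∀ x t : ℝ,
      I * dt u x t + dxx u x t +
        2 * ((‖u (x, t)‖ ^ 2 + ‖u (-x, t)‖ ^ 2 : ℝ) : ℂ)
          * u (x, t) = 0 :=
  one_soliton_solves_reverse_space_nonlocal_NLS_general η u hu
end

section
/- Let η₁, η₂ > 0 with η₁ ≠ η₂ and g = (η₁+η₂)/(η₂−η₁). For every q ∈ ℂ with |q| ≤ 1, there exist α₁, β₁, α₂, β₂ ∈ ℂ satisfying the symmetry system (i)–(iv) together with α₁*α₂ + β₁*β₂ = q. -/
/-!
Multiplying `(α₂, β₂)` by a unit complex number multiplies `q = ᾱ₁α₂ + β̄₁β₂` by it and preserves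
the system, so it suffices to take `q = r ∈ [0, 1]` and look for a real solution. With
`N = ‖α₁‖² + ‖β₁‖²` fixed by (ii), equations (iii) and (iv) express `b, d` linearly in `a, c`,
and the three remaining conditions `a² + b² = N`, `c² + d² = N`, `ac + bd = r` are quadratic in
`(a, c)`. Thanks to (ii), `2gN (ac + bd) = r ((g - 1)(a² + b²) + (g + 1)(c² + d²))` identically, so
the third condition follows from the first two; and the difference of the first two is a binary
quadratic form of discriminant `1 - r² ≥ 0`, so it has a real isotropic vector, which is rescaled.
-/

open Complex

/-- The symmetry system (i)-(iv) relating the eigenvectors of two purely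
imaginary eigenvalues, with `g = (η₁+η₂)/(η₂-η₁)`. -/
def symSys (g : ℝ) (α₁ β₁ α₂ β₂ : ℂ) : Prop :=
  (‖α₁‖ ^ 2 + ‖β₁‖ ^ 2 = ‖α₂‖ ^ 2 + ‖β₂‖ ^ 2) ∧
  (g ^ 2 * ((‖α₁‖ ^ 2 + ‖β₁‖ ^ 2) ^ 2 - 1)
    = (1 - g ^ 2) *
      (1 - ‖(starRingEnd ℂ) α₁ * α₂ + (starRingEnd ℂ) β₁ * β₂‖ ^ 2)) ∧
  (β₁ = (1 + (g : ℂ)) * (α₁ * (starRingEnd ℂ) α₂ + β₁ * (starRingEnd ℂ) β₂) * α₂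
        - (g : ℂ) * ((‖α₂‖ ^ 2 + ‖β₂‖ ^ 2 : ℝ) : ℂ) * α₁) ∧
  (β₂ = (g : ℂ) * ((‖α₁‖ ^ 2 + ‖β₁‖ ^ 2 : ℝ) : ℂ) * α₂
        + (1 - (g : ℂ)) * ((starRingEnd ℂ) α₁ * α₂ + (starRingEnd ℂ) β₁ * β₂) * α₁)

open ComplexConjugate

theorem symSys.mul_left {g : ℝ} {α₁ β₁ α₂ β₂ : ℂ} (h : symSys g α₁ β₁ α₂ β₂) {u : ℂ}
    (hu : ‖u‖ = 1) : symSys g α₁ β₁ (u * α₂) (u * β₂) := by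
  obtain ⟨h₁, h₂, h₃, h₄⟩ := h
  have hu' : u * conj u = 1 := by rw [mul_conj, normSq_eq_norm_sq, hu]; norm_num
  have hinner : conj α₁ * (u * α₂) + conj β₁ * (u * β₂) = u * (conj α₁ * α₂ + conj β₁ * β₂) := by
    ring
  simp only [symSys, norm_mul, hu, one_mul, hinner, map_mul]
  refine ⟨h₁, h₂, ?_, ?_⟩
  · linear_combination h₃ - (1 + (g : ℂ)) * (α₁ * conj α₂ + β₁ * conj β₂) * α₂ * hu'
  · linear_combination u * h₄

theorem symSys_ofReal {g N r a b c d : ℝ} (ha : a ^ 2 + b ^ 2 = N) (hc : c ^ 2 + d ^ 2 = N)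
    (hr : a * c + b * d = r) (hN : g ^ 2 * N ^ 2 = 1 + (g ^ 2 - 1) * r ^ 2)
    (hb : b = (1 + g) * r * c - g * N * a) (hd : d = g * N * c + (1 - g) * r * a) :
    symSys g a b c d := by
  have hinner : (a * c + b * d : ℂ) = r := by exact_mod_cast hr
  simp only [symSys, conj_ofReal, hinner, norm_real, Real.norm_eq_abs, sq_abs, ha, hc, true_and]
  exact ⟨by linear_combination hN, by exact_mod_cast hb, by exact_mod_cast hd⟩

section RealSolution

variable {g N r a b c d : ℝ}

theorem two_mul_mul_inner_eq (hN : g ^ 2 * N ^ 2 = 1 + (g ^ 2 - 1) * r ^ 2)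
    (hb : b = (1 + g) * r * c - g * N * a) (hd : d = g * N * c + (1 - g) * r * a) :
    2 * g * N * (a * c + b * d) = r * ((g - 1) * (a ^ 2 + b ^ 2) + (g + 1) * (c ^ 2 + d ^ 2)) := by
  subst hb hd
  linear_combination (r * (g - 1) * a ^ 2 + r * (g + 1) * c ^ 2 - 2 * g * N * a * c) * hN

theorem sq_add_sq_eq_of_isotropic {s : ℝ} (hN : g ^ 2 * N ^ 2 = 1 + (g ^ 2 - 1) * r ^ 2)
    (hs : s ^ 2 = 1 - r ^ 2) (ha : a = g * N * r + s) (hc : c = 1 + (g - 1) * r ^ 2)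
    (hb : b = (1 + g) * r * c - g * N * a) (hd : d = g * N * c + (1 - g) * r * a) :
    a ^ 2 + b ^ 2 = c ^ 2 + d ^ 2 := by
  subst hb hd ha hc
  linear_combination ((g * N * r + s) ^ 2 - (1 + (g - 1) * r ^ 2) ^ 2
    - 2 * (1 + (g - 1) * r ^ 2) * r ^ 2) * hN + 2 * (1 + (g - 1) * r ^ 2) * hs

theorem exists_isotropic (hg : g ≠ 0) (hN : g ^ 2 * N ^ 2 = 1 + (g ^ 2 - 1) * r ^ 2)
    (hr : r ^ 2 ≤ 1) :
    ∃ a c : ℝ, a ≠ 0 ∧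
      a ^ 2 + ((1 + g) * r * c - g * N * a) ^ 2 = c ^ 2 + (g * N * c + (1 - g) * r * a) ^ 2 := by
  obtain ⟨s, hs, ha⟩ : ∃ s : ℝ, s ^ 2 = 1 - r ^ 2 ∧ g * N * r + s ≠ 0 := by
    obtain ⟨s, hs⟩ : ∃ s : ℝ, s ^ 2 = 1 - r ^ 2 := ⟨√(1 - r ^ 2), Real.sq_sqrt (by linarith)⟩
    by_cases h : g * N * r + s = 0
    · -- if both `g N r ± s` vanish, then `r² = 1` and (ii) forces `g = 0`
      refine ⟨-s, by linear_combination hs, fun h' ↦ pow_ne_zero 2 hg ?_⟩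
      have hs0 : s = 0 := by linarith
      have hgNr : g * N * r = 0 := by linarith
      linear_combination
        g * N * r * hgNr - r ^ 2 * hN - (r ^ 2 - g ^ 2 * (1 + r ^ 2)) * (s * hs0 - hs)
    · exact ⟨s, hs, h⟩
  exact ⟨_, _, ha, sq_add_sq_eq_of_isotropic hN hs rfl rfl rfl rfl⟩

theorem exists_real_symSys (hg : g ≠ 0) (hr : r ^ 2 ≤ 1) :
    ∃ a b c d : ℝ, symSys g a b c d ∧ a * c + b * d = r := by
  have hM : 0 < 1 + (g ^ 2 - 1) * r ^ 2 := by
    rcases hr.lt_or_eq with hr | hr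
    · nlinarith [sq_nonneg (g * r)]
    · have : 0 < g ^ 2 := by positivity
      rw [hr]; linarith
  set N := √(1 + (g ^ 2 - 1) * r ^ 2) / |g|
  have hN : g ^ 2 * N ^ 2 = 1 + (g ^ 2 - 1) * r ^ 2 := by
    rw [div_pow, sq_abs, Real.sq_sqrt hM.le]
    field_simp
  have hgN : 2 * g * N ≠ 0 :=
    mul_ne_zero (mul_ne_zero two_ne_zero hg) (div_pos (Real.sqrt_pos.mpr hM) (abs_pos.mpr hg)).ne'
  obtain ⟨a, c, ha, hiso⟩ := exists_isotropic hg hN hr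
  set b := (1 + g) * r * c - g * N * a
  set d := g * N * c + (1 - g) * r * a
  have hD : 0 < a ^ 2 + b ^ 2 := by positivity
  set t := √(N / (a ^ 2 + b ^ 2))
  have ht : t ^ 2 * (a ^ 2 + b ^ 2) = N := by
    rw [Real.sq_sqrt (by positivity), div_mul_cancel₀ _ hD.ne']
  have hab : (t * a) ^ 2 + (t * b) ^ 2 = N := by rw [← ht]; ring
  have hcd : (t * c) ^ 2 + (t * d) ^ 2 = N := by rw [← ht, hiso]; ring
  have hinner : t * a * (t * c) + t * b * (t * d) = r := by
    refine mul_left_cancel₀ hgN ?_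
    rw [two_mul_mul_inner_eq hN (by ring) (by ring), hab, hcd]
    ring
  exact ⟨_, _, _, _, symSys_ofReal hab hcd hinner hN (by ring) (by ring), hinner⟩

end RealSolution

theorem symSys_solvable_of_abs_le_one
    (η₁ η₂ : ℝ) (h₁ : 0 < η₁) (h₂ : 0 < η₂) (hne : η₁ ≠ η₂)
    (g : ℝ) (hg : g = (η₁ + η₂) / (η₂ - η₁))
    (q : ℂ) (hq : ‖q‖ ≤ 1) :
    ∃ α₁ β₁ α₂ β₂ : ℂ, symSys g α₁ β₁ α₂ β₂ ∧
      (starRingEnd ℂ) α₁ * α₂ + (starRingEnd ℂ) β₁ * β₂ = q := by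
  have hg₀ : g ≠ 0 := hg ▸ div_ne_zero (by linarith) (sub_ne_zero.mpr hne.symm)
  obtain ⟨a, b, c, d, hsys, hr⟩ := exists_real_symSys hg₀ (pow_le_one₀ (norm_nonneg q) hq)
  set u := exp (arg q * I)
  refine ⟨a, b, u * c, u * d, hsys.mul_left (norm_exp_ofReal_mul_I _), ?_⟩
  calc conj (a : ℂ) * (u * c) + conj (b : ℂ) * (u * d) = ((a * c + b * d : ℝ) : ℂ) * u := by
        simp only [conj_ofReal]; push_cast; ring
    _ = q := by rw [hr, norm_mul_exp_arg_mul_I]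
end

section
/- Let η₁, η₂ > 0 with η₁ ≠ η₂ and g = (η₁+η₂)/(η₂−η₁). If α₁, β₁, α₂, β₂ ∈ ℂ satisfy the symmetry system (i)–(iv), then |α₁*α₂ + β₁*β₂| ≤ 1. -/
/-!
Write `N` for the common value in (i) and `S = |α₁*α₂ + β₁*β₂|`. Equation (ii) rearranges to
`1 - S² = g² (N² - S²)`, and `S² ≤ N²` is Cauchy–Schwarz in `ℂ²`, since `N²` is the product of
the squared norms of `(α₁, β₁)` and `(α₂, β₂)`.
-/

open Complex

theorem norm_conj_mul_add_conj_mul_sq_le (a b c d : ℂ) :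
    ‖starRingEnd ℂ a * c + starRingEnd ℂ b * d‖ ^ 2 ≤
      (‖a‖ ^ 2 + ‖b‖ ^ 2) * (‖c‖ ^ 2 + ‖d‖ ^ 2) := by
  have h := norm_inner_le_norm (𝕜 := ℂ) !₂[a, b] !₂[c, d]
  simp only [EuclideanSpace.inner_eq_star_dotProduct, EuclideanSpace.norm_eq, Fin.sum_univ_two,
    dotProduct, Matrix.cons_val_zero, Matrix.cons_val_one, Pi.star_apply, Complex.star_def] at h
  rw [← Real.sqrt_mul (by positivity), mul_comm c, mul_comm d] at h
  calc _ ≤ (√((‖a‖ ^ 2 + ‖b‖ ^ 2) * (‖c‖ ^ 2 + ‖d‖ ^ 2))) ^ 2 := by gcongr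
    _ = _ := Real.sq_sqrt (by positivity)

theorem symSys_implies_abs_le_one_general
    (g : ℝ)
    (α₁ β₁ α₂ β₂ : ℂ) (h : symSys g α₁ β₁ α₂ β₂) :
    ‖(starRingEnd ℂ) α₁ * α₂ + (starRingEnd ℂ) β₁ * β₂‖ ≤ 1 := by
  obtain ⟨hnorm, hrel, -, -⟩ := h
  set S := ‖(starRingEnd ℂ) α₁ * α₂ + (starRingEnd ℂ) β₁ * β₂‖
  set N := ‖α₁‖ ^ 2 + ‖β₁‖ ^ 2
  have hCS : S ^ 2 ≤ N ^ 2 := by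
    simpa only [sq N, ← hnorm] using norm_conj_mul_add_conj_mul_sq_le α₁ β₁ α₂ β₂
  have hkey : 1 - S ^ 2 = g ^ 2 * (N ^ 2 - S ^ 2) := by linear_combination -hrel
  have hS : S ^ 2 ≤ 1 := by linarith [mul_nonneg (sq_nonneg g) (sub_nonneg.2 hCS)]
  exact (pow_le_one_iff_of_nonneg (norm_nonneg _) two_ne_zero).1 hS

theorem symSys_implies_abs_le_one
    (η₁ η₂ : ℝ) (h₁ : 0 < η₁) (h₂ : 0 < η₂) (hne : η₁ ≠ η₂)
    (g : ℝ) (hg : g = (η₁ + η₂) / (η₂ - η₁))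
    (α₁ β₁ α₂ β₂ : ℂ) (h : symSys g α₁ β₁ α₂ β₂) :
    ‖(starRingEnd ℂ) α₁ * α₂ + (starRingEnd ℂ) β₁ * β₂‖ ≤ 1 :=
  symSys_implies_abs_le_one_general g α₁ β₁ α₂ β₂ h
end

section
/- Let η₁, η₂ > 0 with η₁ ≠ η₂, set ζ₁ = iη₁ and ζ₂ = iη₂, and let α₁, β₁, α₂, β₂ ∈ ℂ. If C₁ = C₂, C₃ = C₄, A₂ = B₁ and A₃ = B₄, then also A₁ = B₂ and A₄ = B₃; that is, only two of the four conditions A₁ = B₂, A₂ = B₁, A₃ = B₄, A₄ = B₃ are independent once the two C-conditions hold. -/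
open Complex

noncomputable def A₁ (ζ₁ ζ₂ α₁ β₁ α₂ β₂ : ℂ) : ℂ :=
  (1 / ((starRingEnd ℂ) ζ₂ - ζ₂) - 1 / ((starRingEnd ℂ) ζ₁ - ζ₂)) * α₁

noncomputable def A₂ (ζ₁ ζ₂ α₁ β₁ α₂ β₂ : ℂ) : ℂ :=
  α₁ * ((‖α₂‖ ^ 2 + ‖β₂‖ ^ 2 : ℝ) : ℂ) / ((starRingEnd ℂ) ζ₂ - ζ₂)
    - α₂ * (α₁ * (starRingEnd ℂ) α₂ + β₁ * (starRingEnd ℂ) β₂) / ((starRingEnd ℂ) ζ₂ - ζ₁)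

noncomputable def A₃ (ζ₁ ζ₂ α₁ β₁ α₂ β₂ : ℂ) : ℂ :=
  α₂ * ((‖α₁‖ ^ 2 + ‖β₁‖ ^ 2 : ℝ) : ℂ) / ((starRingEnd ℂ) ζ₁ - ζ₁)
    - α₁ * ((starRingEnd ℂ) α₁ * α₂ + (starRingEnd ℂ) β₁ * β₂) / ((starRingEnd ℂ) ζ₁ - ζ₂)

noncomputable def A₄ (ζ₁ ζ₂ α₁ β₁ α₂ β₂ : ℂ) : ℂ :=
  (1 / ((starRingEnd ℂ) ζ₁ - ζ₁) - 1 / ((starRingEnd ℂ) ζ₂ - ζ₁)) * α₂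

noncomputable def B₁ (ζ₁ ζ₂ α₁ β₁ α₂ β₂ : ℂ) : ℂ :=
  (1 / ((starRingEnd ℂ) ζ₂ - ζ₂) - 1 / ((starRingEnd ℂ) ζ₁ - ζ₂)) * β₁

noncomputable def B₂ (ζ₁ ζ₂ α₁ β₁ α₂ β₂ : ℂ) : ℂ :=
  β₁ * ((‖α₂‖ ^ 2 + ‖β₂‖ ^ 2 : ℝ) : ℂ) / ((starRingEnd ℂ) ζ₂ - ζ₂)
    - β₂ * (α₁ * (starRingEnd ℂ) α₂ + β₁ * (starRingEnd ℂ) β₂) / ((starRingEnd ℂ) ζ₂ - ζ₁)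

noncomputable def B₃ (ζ₁ ζ₂ α₁ β₁ α₂ β₂ : ℂ) : ℂ :=
  β₂ * ((‖α₁‖ ^ 2 + ‖β₁‖ ^ 2 : ℝ) : ℂ) / ((starRingEnd ℂ) ζ₁ - ζ₁)
    - β₁ * ((starRingEnd ℂ) α₁ * α₂ + (starRingEnd ℂ) β₁ * β₂) / ((starRingEnd ℂ) ζ₁ - ζ₂)

noncomputable def B₄ (ζ₁ ζ₂ α₁ β₁ α₂ β₂ : ℂ) : ℂ :=
  (1 / ((starRingEnd ℂ) ζ₁ - ζ₁) - 1 / ((starRingEnd ℂ) ζ₂ - ζ₁)) * β₂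

noncomputable def C₁ (ζ₁ ζ₂ α₁ β₁ α₂ β₂ : ℂ) : ℂ :=
  1 / (((starRingEnd ℂ) ζ₁ - ζ₁) * ((starRingEnd ℂ) ζ₂ - ζ₂))
    + 1 / ((‖(starRingEnd ℂ) ζ₁ - ζ₂‖ ^ 2 : ℝ) : ℂ)

noncomputable def C₂ (ζ₁ ζ₂ α₁ β₁ α₂ β₂ : ℂ) : ℂ :=
  (((‖α₁‖ ^ 2 + ‖β₁‖ ^ 2) * (‖α₂‖ ^ 2 + ‖β₂‖ ^ 2) : ℝ) : ℂ)
      / (((starRingEnd ℂ) ζ₁ - ζ₁) * ((starRingEnd ℂ) ζ₂ - ζ₂))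
    + ((‖(starRingEnd ℂ) α₁ * α₂ + (starRingEnd ℂ) β₁ * β₂‖ ^ 2 : ℝ) : ℂ)
      / ((‖(starRingEnd ℂ) ζ₁ - ζ₂‖ ^ 2 : ℝ) : ℂ)

noncomputable def C₃ (ζ₁ ζ₂ α₁ β₁ α₂ β₂ : ℂ) : ℂ :=
  ((‖α₁‖ ^ 2 + ‖β₁‖ ^ 2 : ℝ) : ℂ)
    / (((starRingEnd ℂ) ζ₁ - ζ₁) * ((starRingEnd ℂ) ζ₂ - ζ₂))

noncomputable def C₄ (ζ₁ ζ₂ α₁ β₁ α₂ β₂ : ℂ) : ℂ :=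
  ((‖α₂‖ ^ 2 + ‖β₂‖ ^ 2 : ℝ) : ℂ)
    / (((starRingEnd ℂ) ζ₁ - ζ₁) * ((starRingEnd ℂ) ζ₂ - ζ₂))

noncomputable def C₅ (ζ₁ ζ₂ α₁ β₁ α₂ β₂ : ℂ) : ℂ :=
  (α₁ * (starRingEnd ℂ) α₂ + β₁ * (starRingEnd ℂ) β₂)
    / ((‖(starRingEnd ℂ) ζ₁ - ζ₂‖ ^ 2 : ℝ) : ℂ)


/-! With `a = 1/(ζ₁* - ζ₁)`, `b = 1/(ζ₂* - ζ₂)`, `c = 1/(ζ₁* - ζ₂)`, the condition `C₃ = C₄` says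
`|α₁|² + |β₁|² = |α₂|² + |β₂|² =: n`. Writing `p = α₁α₂* + β₁β₂*`, `M = [[b n, -c p], [-c p*, a n]]`
and `D = diag(b - c, a - c)`, the hypotheses `A₂ = B₁`, `A₃ = B₄` say `M α = D β` and the
conclusion says `D α = M β`. On the imaginary axis `ζ₂* - ζ₁ = ζ₁* - ζ₂` is the mean of
`ζ₁* - ζ₁` and `ζ₂* - ζ₂`, so `c` is the harmonic mean of `a` and `b`; together with `C₁ = C₂`
this gives `M D⁻¹ M = D`, hence `D α = M D⁻¹ M α = M β`. -/

open ComplexConjugate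

section Field

variable {K : Type*} [Field K]

theorem swap_relation_of_harmonic_mean {a b c n p q α₁ α₂ β₁ β₂ : K}
    (hmean : c * (a + b) = 2 * a * b) (hac : a ≠ c) (hbc : b ≠ c)
    (hC : a * b - c ^ 2 = n ^ 2 * a * b - p * q * c ^ 2)
    (h₂ : b * n * α₁ - c * p * α₂ = (b - c) * β₁)
    (h₃ : a * n * α₂ - c * q * α₁ = (a - c) * β₂) :
    (b - c) * α₁ = b * n * β₁ - c * p * β₂ := by
  refine mul_left_cancel₀ (mul_ne_zero (sub_ne_zero.2 hbc) (sub_ne_zero.2 hac)) ?_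
  linear_combination b * n * (a - c) * h₂ - c * p * (b - c) * h₃
    - c * p * n * α₂ * hmean - (b - c) * α₁ * hC + (n ^ 2 * b - (b - c)) * α₁ * hmean

theorem AB_relations_of_arithmetic_mean {d₁ d₂ e n₁ n₂ p q α₁ α₂ β₁ β₂ : K}
    (hd₁ : d₁ ≠ 0) (hd₂ : d₂ ≠ 0) (he : e ≠ 0) (hne : d₁ ≠ d₂) (hmean : d₁ + d₂ = 2 * e)
    (hC12 : 1 / (d₁ * d₂) + 1 / -e ^ 2 = n₁ * n₂ / (d₁ * d₂) + q * p / -e ^ 2)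
    (hC34 : n₁ / (d₁ * d₂) = n₂ / (d₁ * d₂))
    (hA2B1 : α₁ * n₂ / d₂ - α₂ * p / e = (1 / d₂ - 1 / e) * β₁)
    (hA3B4 : α₂ * n₁ / d₁ - α₁ * q / e = (1 / d₁ - 1 / e) * β₂) :
    (1 / d₂ - 1 / e) * α₁ = β₁ * n₂ / d₂ - β₂ * p / e ∧
    (1 / d₁ - 1 / e) * α₂ = β₂ * n₁ / d₁ - β₁ * q / e := by
  obtain rfl : n₁ = n₂ := (div_left_inj' (mul_ne_zero hd₁ hd₂)).1 hC34
  have hd₁e : d₁⁻¹ ≠ e⁻¹ := inv_injective.ne fun h ↦ hne (by linear_combination 2 * h - hmean)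
  have hd₂e : d₂⁻¹ ≠ e⁻¹ := inv_injective.ne fun h ↦ hne (by linear_combination -2 * h + hmean)
  have hharm : e⁻¹ * (d₁⁻¹ + d₂⁻¹) = 2 * d₁⁻¹ * d₂⁻¹ := by
    field_simp
    linear_combination hmean
  have hC : d₁⁻¹ * d₂⁻¹ - e⁻¹ ^ 2 = n₁ ^ 2 * d₁⁻¹ * d₂⁻¹ - p * q * e⁻¹ ^ 2 := by
    linear_combination hC12
  have h₂ : d₂⁻¹ * n₁ * α₁ - e⁻¹ * p * α₂ = (d₂⁻¹ - e⁻¹) * β₁ := by linear_combination hA2B1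
  have h₃ : d₁⁻¹ * n₁ * α₂ - e⁻¹ * q * α₁ = (d₁⁻¹ - e⁻¹) * β₂ := by linear_combination hA3B4
  constructor
  · linear_combination swap_relation_of_harmonic_mean hharm hd₁e hd₂e hC h₂ h₃
  · linear_combination swap_relation_of_harmonic_mean (by linear_combination hharm) hd₂e hd₁e
      (by linear_combination hC) h₃ h₂

end Field

theorem conj_I_mul_ofReal_sub (x y : ℝ) : conj (I * x) - I * y = -I * ↑(x + y) := by
  simp only [map_mul, conj_I, conj_ofReal, ofReal_add]
  ring

theorem ofReal_norm_neg_I_mul_sq (x : ℝ) : ((‖-I * x‖ ^ 2 : ℝ) : ℂ) = -(-I * x) ^ 2 := by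
  simp [mul_pow]

theorem two_AB_conditions_imply_other_two
    (η₁ η₂ : ℝ) (h₁ : 0 < η₁) (h₂ : 0 < η₂) (hne : η₁ ≠ η₂)
    (ζ₁ ζ₂ : ℂ) (hζ₁ : ζ₁ = I * η₁) (hζ₂ : ζ₂ = I * η₂)
    (α₁ β₁ α₂ β₂ : ℂ)
    (hC12 : C₁ ζ₁ ζ₂ α₁ β₁ α₂ β₂ = C₂ ζ₁ ζ₂ α₁ β₁ α₂ β₂)
    (hC34 : C₃ ζ₁ ζ₂ α₁ β₁ α₂ β₂ = C₄ ζ₁ ζ₂ α₁ β₁ α₂ β₂)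
    (hA2B1 : A₂ ζ₁ ζ₂ α₁ β₁ α₂ β₂ = B₁ ζ₁ ζ₂ α₁ β₁ α₂ β₂)
    (hA3B4 : A₃ ζ₁ ζ₂ α₁ β₁ α₂ β₂ = B₄ ζ₁ ζ₂ α₁ β₁ α₂ β₂) :
    A₁ ζ₁ ζ₂ α₁ β₁ α₂ β₂ = B₂ ζ₁ ζ₂ α₁ β₁ α₂ β₂ ∧
    A₄ ζ₁ ζ₂ α₁ β₁ α₂ β₂ = B₃ ζ₁ ζ₂ α₁ β₁ α₂ β₂ := by
  subst hζ₁ hζ₂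
  have hq : ((‖conj α₁ * α₂ + conj β₁ * β₂‖ ^ 2 : ℝ) : ℂ)
      = (conj α₁ * α₂ + conj β₁ * β₂) * (α₁ * conj α₂ + β₁ * conj β₂) := by
    simp [← mul_conj']
  simp only [A₁, A₂, A₃, A₄, B₁, B₂, B₃, B₄, C₁, C₂, C₃, C₄, conj_I_mul_ofReal_sub,
    add_comm η₂ η₁, ofReal_mul, ofReal_norm_neg_I_mul_sq, hq]
    at hC12 hC34 hA2B1 hA3B4 ⊢
  have hne₀ (x : ℝ) (hx : x ≠ 0) : -I * (x : ℂ) ≠ 0 :=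
    mul_ne_zero (neg_ne_zero.2 I_ne_zero) (ofReal_ne_zero.2 hx)
  refine AB_relations_of_arithmetic_mean (hne₀ _ (by positivity)) (hne₀ _ (by positivity))
    (hne₀ _ (by positivity)) ?_ (by push_cast; ring) hC12 hC34 hA2B1 hA3B4
  exact (mul_right_injective₀ (neg_ne_zero.2 I_ne_zero)).ne
    (ofReal_injective.ne fun h ↦ hne (by linarith))
end
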